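/- arXiv:2309.07070 — 4 statements merged into one kernel-verified Lean document; each statement's English description precedes it below -/
import Mathlib

section
/- For every n ≥ 3, the word p_n (the Fibonacci word f_n with its last two letters removed) is a palindrome. -/
/-- The Fibonacci morphism: `false` (=0) ↦ 01, `true` (=1) ↦ 0. -/
def phi (w : List Bool) : List Bool :=
  w.flatMap (fun b => if b then [false] else [false, true])

/-- The Fibonacci words: f₁ = 1, f₂ = 0, f_{n+2} = f_{n+1} f_n. -/
def fw : ℕ → List Bool
  | 0 => []
  | 1 => [true]
  | 2 => [false]
  | (n+3) => fw (n+2) ++ fw (n+1)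

/-- Palindromic prefix: f_n with its last two letters removed. -/
def pw (n : ℕ) : List Bool := (fw n).dropLast.dropLast

/-- Minimal forbidden words of the Fibonacci word:
`M_{2n+1} = 1 p_{2n+1} 1`, `M_{2n+2} = 0 p_{2n+2} 0`. -/
def Mw (n : ℕ) : List Bool :=
  if n % 2 = 0 then false :: (pw n ++ [false]) else true :: (pw n ++ [true])

/-- Correlation bit: `corr u v k` holds iff `C_{u,v}[k] = 1`. -/
def corr {α : Type*} (u v : List α) (k : ℕ) : Prop :=
  ∀ i j : ℕ, i < u.length → j < v.length → i = j + k → u[i]? = v[j]?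

/-- A border of a word is both a prefix and a suffix. -/
def IsBorder {α : Type*} (b w : List α) : Prop := b <+: w ∧ b <:+ w

/-- The set of nonempty borders of `M_n`. -/
def Bset (n : ℕ) : Set (List Bool) := {b | b ≠ [] ∧ IsBorder b (Mw n)}

open scoped Classical in
/-- The correlation polynomial `C_{u,v}(z) = ∑_{k<|u|} C_{u,v}[k] z^{|u|-1-k}`. -/
noncomputable def corrPoly (u v : List Bool) : Polynomial ℤ :=
  ∑ k ∈ Finset.range u.length,
    if corr u v k then Polynomial.X ^ (u.length - 1 - k) else 0

open scoped Classical in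
/-- The nonempty borders of `w`, as a finset. -/
noncomputable def borderFinset (w : List Bool) : Finset (List Bool) :=
  ((Finset.range (w.length + 1)).image (fun k => w.take k)).filter
    (fun b => b ≠ [] ∧ b <:+ w)

/-!
Write `t_n` for the last two letters of `f_n`; they are `10` or `01` according to the parity of
`n`, so `t_n` is the reverse of `t_{n+1}`. Deleting two letters from `f_{n+2} = f_{n+1} f_n`
gives `p_{n+2} = f_{n+1} p_n`, and by induction also `p_{n+2} = f_n p_{n+1}`. Hence
`p_{n+2} = p_{n+1} t_{n+1} p_n` reverses, by induction, to `p_n t_n p_{n+1} = f_n p_{n+1} = p_{n+2}`.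
-/

theorem List.dropLast_dropLast_append {α : Type*} (l : List α) {l' : List α}
    (hl' : 2 ≤ l'.length) : (l ++ l').dropLast.dropLast = l ++ l'.dropLast.dropLast := by
  have hne : l' ≠ [] := List.ne_nil_of_length_pos (by omega)
  have hne' : l'.dropLast ≠ [] := List.ne_nil_of_length_pos (by rw [List.length_dropLast]; omega)
  rw [List.dropLast_append_of_ne_nil hne, List.dropLast_append_of_ne_nil hne']

theorem length_fw : ∀ n, (fw n).length = Nat.fib n
  | 0 => rfl
  | 1 => rfl
  | 2 => rfl
  | n + 3 => by
    rw [fw, List.length_append, length_fw (n + 2), length_fw (n + 1), add_comm]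
    exact Nat.fib_add_two.symm

theorem fw_add_two {n : ℕ} (hn : 1 ≤ n) : fw (n + 2) = fw (n + 1) ++ fw n := by
  obtain ⟨m, rfl⟩ : ∃ m, n = m + 1 := ⟨n - 1, by omega⟩
  rfl

theorem pw_add_two_eq_fw_succ_append {n : ℕ} (hn : 3 ≤ n) :
    pw (n + 2) = fw (n + 1) ++ pw n := by
  have hlen : 2 ≤ (fw n).length := by
    rw [length_fw]
    exact Nat.fib_mono hn
  rw [pw, fw_add_two (by omega), List.dropLast_dropLast_append _ hlen, pw]

theorem pw_add_two_eq_fw_append {n : ℕ} (hn : 3 ≤ n) :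
    pw (n + 2) = fw n ++ pw (n + 1) := by
  induction n, hn using Nat.le_induction with
  | base => rfl
  | succ n hn ih =>
    calc pw (n + 3) = fw (n + 2) ++ pw (n + 1) := pw_add_two_eq_fw_succ_append (by omega)
      _ = fw (n + 1) ++ (fw n ++ pw (n + 1)) := by rw [fw_add_two (by omega), List.append_assoc]
      _ = fw (n + 1) ++ pw (n + 2) := by rw [ih]

/-- The last two letters of `f_n` (for `n ≥ 3`). -/
def fibTail (n : ℕ) : List Bool := [!n.bodd, n.bodd]

theorem fibTail_add_two (n : ℕ) : fibTail (n + 2) = fibTail n := by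
  simp [fibTail, Nat.bodd_succ]

theorem reverse_fibTail_succ (n : ℕ) : (fibTail (n + 1)).reverse = fibTail n := by
  simp [fibTail, Nat.bodd_succ]

theorem fw_eq_pw_append_fibTail : ∀ n, fw (n + 3) = pw (n + 3) ++ fibTail (n + 3)
  | 0 => rfl
  | 1 => rfl
  | n + 2 => by
    rw [fw_add_two (by omega), fw_eq_pw_append_fibTail n,
      pw_add_two_eq_fw_succ_append (n := n + 3) (by omega), List.append_assoc,
      fibTail_add_two (n + 3)]

theorem reverse_pw : ∀ n, (pw (n + 3)).reverse = pw (n + 3)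
  | 0 => rfl
  | 1 => rfl
  | n + 2 => by
    calc (pw (n + 5)).reverse
        = (pw (n + 4) ++ fibTail (n + 4) ++ pw (n + 3)).reverse := by
          rw [pw_add_two_eq_fw_succ_append (n := n + 3) (by omega), fw_eq_pw_append_fibTail (n + 1)]
      _ = pw (n + 3) ++ fibTail (n + 3) ++ pw (n + 4) := by
          simp only [List.reverse_append, reverse_pw n, reverse_pw (n + 1),
            reverse_fibTail_succ, List.append_assoc]
      _ = pw (n + 5) := by
          rw [← fw_eq_pw_append_fibTail n, pw_add_two_eq_fw_append (n := n + 3) (by omega)]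

theorem stmt2 (n : ℕ) (hn : 3 ≤ n) : (pw n).reverse = pw n := by
  obtain ⟨m, rfl⟩ : ∃ m, n = m + 3 := ⟨n - 3, by omega⟩
  exact reverse_pw m
end

section
/- For every n ≥ 1, φ(1·p_{2n+2}·1)·0 = 0·p_{2n+3}·0, where φ is the Fibonacci morphism. -/
/-!
Since `φ(f_{k+1}) = f_{k+2}` and `f_{2n+2}` ends in `10` for `n ≥ 1`, writing
`f_{2n+2} = p·10` gives `f_{2n+3} = φ(p)·0·01`, so `p_{2n+3} = φ(p_{2n+2})·0`. The claim follows
from `φ(1·p·1)·0 = 0·φ(p)·0·0`.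
-/

theorem phi_append (u v : List Bool) : phi (u ++ v) = phi u ++ phi v :=
  List.flatMap_append

theorem phi_fw : ∀ n, phi (fw (n + 1)) = fw (n + 2)
  | 0 => rfl
  | 1 => rfl
  | n + 2 => by
    rw [show fw (n + 3) = fw (n + 2) ++ fw (n + 1) from rfl, phi_append, phi_fw (n + 1),
      phi_fw n]
    rfl

theorem fw_suffix_fw_add_two : ∀ n, fw n <:+ fw (n + 2)
  | 0 => List.nil_suffix
  | n + 1 => List.suffix_append (fw (n + 2)) (fw (n + 1))

theorem true_false_suffix_fw_two_mul_add_two {n : ℕ} (hn : 1 ≤ n) : [true, false] <:+ fw (2 * n + 2) := by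
  induction n, hn using Nat.le_induction with
  | base => decide
  | succ n _ ih => exact ih.trans (fw_suffix_fw_add_two (2 * n + 2))

theorem pw_eq_of_fw_eq_append {n : ℕ} {u : List Bool} {a b : Bool} (h : fw n = u ++ [a, b]) :
    pw n = u := by
  rw [pw, h, show u ++ [a, b] = u ++ [a] ++ [b] by simp, List.dropLast_concat,
    List.dropLast_concat]

theorem stmt4 (n : ℕ) (hn : 1 ≤ n) :
    phi (true :: (pw (2*n+2) ++ [true])) ++ [false]
      = false :: (pw (2*n+3) ++ [false]) := by
  obtain ⟨u, hu⟩ := true_false_suffix_fw_two_mul_add_two hn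
  have hp : pw (2 * n + 2) = u := pw_eq_of_fw_eq_append hu.symm
  have hf : fw (2 * n + 3) = (phi u ++ [false]) ++ [false, true] := by
    rw [← phi_fw, ← hu, phi_append]
    simp [phi]
  rw [hp, pw_eq_of_fw_eq_append hf]
  simp [phi]
end

section
/- Let u and v be palindromes of lengths n ≤ m. Then for every k ∈ [0,n), C_{u,v}[k] = C_{v,u}[m−n+k]; i.e., the correlation of u over v is the length-n suffix of the correlation of v over u. -/
theorem corr_iff_forall_getElem? {α : Type*} (u v : List α) (k : ℕ) :
    corr u v k ↔ ∀ j, j + k < u.length → j < v.length → u[j + k]? = v[j]? := by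
  refine ⟨fun h j hu hv => h _ _ hu hv rfl, ?_⟩
  rintro h _ j hu hv rfl
  exact h j hu hv

theorem corr_iff_corr_reverse {α : Type*} (u v : List α) (h : u.length ≤ v.length) (k : ℕ) :
    corr u v k ↔ corr v.reverse u.reverse (v.length - u.length + k) := by
  -- reversal sends the aligned pair at position `j` to the one at position `|u| - 1 - j - k`
  simp only [corr_iff_forall_getElem?, List.length_reverse]
  constructor
  · intro H j hj hju
    rw [List.getElem?_reverse hj, List.getElem?_reverse hju]
    convert (H (u.length - 1 - j - k) (by omega) (by omega)).symm using 2 <;> omega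
  · intro H j hj hjv
    have := H (u.length - 1 - j - k) (by omega) (by omega)
    rw [List.getElem?_reverse (by omega), List.getElem?_reverse (by omega)] at this
    convert this.symm using 2 <;> omega

theorem stmt9_general {α : Type*} (u v : List α) (hu : u.reverse = u) (hv : v.reverse = v)
    (h : u.length ≤ v.length) (k : ℕ) :
    corr u v k ↔ corr v u (v.length - u.length + k) := by
  simpa only [hu, hv] using corr_iff_corr_reverse u v h k

theorem stmt9 {α : Type*} (u v : List α) (hu : u.reverse = u) (hv : v.reverse = v)
    (h : u.length ≤ v.length) (k : ℕ) (hk : k < u.length) :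
    corr u v k ↔ corr v u (v.length - u.length + k) :=
  stmt9_general u v hu hv h k
end

section
/- For 1 ≤ n < m, the set of common nonempty borders of M_{2n+1} and M_{2m+1} equals B_{2n+1} \ {M_{2n+1}}, and the set of common nonempty borders of M_{2n+2} and M_{2m+2} equals B_{2n+2} \ {M_{2n+2}}; i.e., every proper nonempty border of the shorter word is a border of the longer word of the same parity. -/
/-! Write `c` for the parity bit `bodd j`. For `j ≥ 3` the word `f_j` ends in `(¬c) c`, so
`f_j = p_j (¬c) c` and `M_j = c p_j c`, and `f_{j+2} = f_{j+1} f_j` gives `p_{j+2} = f_{j+1} p_j`.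
Hence for `k = j + 2i > j`, `p_j` is a suffix of `p_k`, and `p_j (¬c)`, a prefix of `f_j` and so
of `f_k`, is a prefix of the longer word `p_k`. Every proper border of `c p_j c` is then a prefix of
`c p_j` and a suffix of `p_j c`, hence a border of `c p_k c`; but `c p_j c` itself is not a prefix
of `c p_k c`, which begins with `c p_j (¬c)`. -/

lemma isBorder_cons_append_iff {α : Type*} {c d : α} (hdc : d ≠ c) {p q : List α}
    (hsuf : p <:+ q) (hpre : p ++ [d] <+: q) (b : List α) :
    IsBorder b (c :: (p ++ [c])) ∧ IsBorder b (c :: (q ++ [c])) ↔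
      IsBorder b (c :: (p ++ [c])) ∧ b ≠ c :: (p ++ [c]) := by
  refine and_congr_right fun ⟨hbpre, hbsuf⟩ => ⟨?_, fun hne => ⟨?_, ?_⟩⟩
  · rintro ⟨hM, -⟩ rfl
    have hc : p ++ [c] <+: q ++ [c] := (List.prefix_cons_inj c).1 hM
    have hd : p ++ [d] <+: q ++ [c] := hpre.trans (List.prefix_append _ _)
    have := (List.prefix_of_prefix_length_le hd hc (by simp)).eq_of_length (by simp)
    exact hdc (by simpa using this)
  · rw [← List.cons_append] at hbpre hne
    have hb : b <+: c :: p := (List.prefix_concat_iff.1 hbpre).resolve_left hne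
    exact hb.trans ((List.prefix_cons_inj c).2
      (((List.prefix_append p [d]).trans hpre).trans (List.prefix_append q [c])))
  · have hb : b <:+ p ++ [c] := (List.suffix_cons_iff.1 hbsuf).resolve_left hne
    exact hb.trans ((List.suffix_append_self_iff.2 hsuf).trans (List.suffix_cons c _))

lemma fw_add_three (j : ℕ) : fw (j + 3) = fw (j + 2) ++ fw (j + 1) := rfl

lemma fw_prefix_fw {j k : ℕ} (hj : 2 ≤ j) (hjk : j ≤ k) : fw j <+: fw k := by
  induction k, hjk using Nat.le_induction with
  | base => exact List.prefix_rfl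
  | succ k hk ih =>
    obtain ⟨i, rfl⟩ : ∃ i, k = i + 2 := ⟨k - 2, by omega⟩
    exact ih.trans (List.prefix_append _ _)

lemma fw_ne_nil {j : ℕ} (hj : 1 ≤ j) : fw j ≠ [] := by
  obtain rfl | hj := hj.eq_or_lt
  · simp [fw]
  · exact (fw_prefix_fw le_rfl hj).ne_nil (by simp [fw])

lemma length_fw_lt_length_fw_add_two {j : ℕ} (hj : 1 ≤ j) :
    (fw j).length < (fw (j + 2)).length := by
  obtain ⟨i, rfl⟩ : ∃ i, j = i + 1 := ⟨j - 1, by omega⟩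
  rw [fw_add_three, List.length_append, lt_add_iff_pos_left, List.length_pos_iff]
  exact fw_ne_nil (by omega)

lemma pw_of_fw_eq {j : ℕ} {x : List Bool} {a b : Bool} (h : fw j = x ++ [a, b]) :
    pw j = x := by
  rw [pw, h, show x ++ [a, b] = x ++ [a] ++ [b] by simp, List.dropLast_concat,
    List.dropLast_concat]

lemma fw_eq_pw_append {j : ℕ} (hj : 3 ≤ j) : fw j = pw j ++ [!j.bodd, j.bodd] := by
  induction j using Nat.strong_induction_on with
  | _ j ih =>
    match j, hj with
    | 3, _ | 4, _ => decide
    | i + 5, _ =>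
      have htail :
          fw (i + 5) = (fw (i + 4) ++ pw (i + 3)) ++ [!(i + 5).bodd, (i + 5).bodd] := by
        rw [fw_add_three, ih (i + 3) (by omega) (by omega), List.append_assoc]
        simp
      rwa [pw_of_fw_eq htail]

lemma pw_add_two {j : ℕ} (hj : 3 ≤ j) : pw (j + 2) = fw (j + 1) ++ pw j := by
  refine pw_of_fw_eq (a := !j.bodd) (b := j.bodd) ?_
  obtain ⟨i, rfl⟩ : ∃ i, j = i + 1 := ⟨j - 1, by omega⟩
  rw [fw_add_three, fw_eq_pw_append hj, List.append_assoc]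

lemma length_pw {j : ℕ} (hj : 3 ≤ j) : (pw j).length + 2 = (fw j).length := by
  simp [fw_eq_pw_append hj]

lemma pw_suffix_pw_add_two_mul {j : ℕ} (hj : 3 ≤ j) (i : ℕ) : pw j <:+ pw (j + 2 * i) := by
  induction i with
  | zero => exact List.suffix_rfl
  | succ i ih =>
    rw [show j + 2 * (i + 1) = j + 2 * i + 2 by ring, pw_add_two (by omega)]
    exact ih.trans (List.suffix_append _ _)

lemma pw_append_prefix_pw {j k : ℕ} (hj : 3 ≤ j) (hjk : j + 2 ≤ k) :
    pw j ++ [!j.bodd] <+: pw k := by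
  have hfw : pw j ++ [!j.bodd] <+: fw k :=
    (fw_eq_pw_append hj ▸ ⟨[j.bodd], by simp⟩ : pw j ++ [!j.bodd] <+: fw j).trans
      (fw_prefix_fw (by omega) (by omega))
  refine List.prefix_of_prefix_length_le hfw
    ((List.dropLast_prefix _).trans (List.dropLast_prefix _)) ?_
  have hgrow := length_fw_lt_length_fw_add_two (j := j) (by omega)
  have hmono := (fw_prefix_fw (j := j + 2) (k := k) (by omega) hjk).length_le
  have hj_len := length_pw hj
  have hk_len := length_pw (j := k) (by omega)
  simp only [List.length_append, List.length_singleton]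
  omega

lemma Mw_eq (j : ℕ) : Mw j = j.bodd :: (pw j ++ [j.bodd]) := by
  cases h : j.bodd <;> simp [Mw, Nat.mod_two_of_bodd, h]

lemma setOf_isBorder_Mw_add_two_mul {j i : ℕ} (hj : 3 ≤ j) (hi : 0 < i) :
    {b : List Bool | b ≠ [] ∧ IsBorder b (Mw j) ∧ IsBorder b (Mw (j + 2 * i))}
      = Bset j \ {Mw j} := by
  have hbodd : (j + 2 * i).bodd = j.bodd := by simp [Nat.bodd_add]
  ext b
  simp only [Bset, Set.mem_ofPred_eq, Set.mem_sdiff, Set.mem_singleton_iff, and_assoc]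
  rw [Mw_eq, Mw_eq, hbodd, isBorder_cons_append_iff (Bool.not_ne_self _)
    (pw_suffix_pw_add_two_mul hj i) (pw_append_prefix_pw hj (by omega))]

theorem stmt18 (n m : ℕ) (hn : 1 ≤ n) (hnm : n < m) :
    {b : List Bool | b ≠ [] ∧ IsBorder b (Mw (2*n+1)) ∧ IsBorder b (Mw (2*m+1))}
      = Bset (2*n+1) \ {Mw (2*n+1)} ∧
    {b : List Bool | b ≠ [] ∧ IsBorder b (Mw (2*n+2)) ∧ IsBorder b (Mw (2*m+2))}
      = Bset (2*n+2) \ {Mw (2*n+2)} := by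
  have hodd := setOf_isBorder_Mw_add_two_mul (j := 2*n+1) (i := m - n) (by omega) (by omega)
  have heven := setOf_isBorder_Mw_add_two_mul (j := 2*n+2) (i := m - n) (by omega) (by omega)
  rw [show 2*n+1 + 2*(m-n) = 2*m+1 by omega] at hodd
  rw [show 2*n+2 + 2*(m-n) = 2*m+2 by omega] at heven
  exact ⟨hodd, heven⟩
end
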